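/- (Iterated Lie derivatives of the homogenized system.) Let Z : ℝ^m → ℝ^m and Γ : ℝ^m → ℝ be C^∞, and for ξ ∈ ℝ define on ℝ^m × (0, ∞) the homogenized vector field S(z, w) = (w^(ξ+1)·Z(w⁻¹·z), 0) and the homogenized function Γ̃(z, w) = Γ(w⁻¹·z). Then for every k ≥ 0, every z ∈ ℝ^m and every w > 0, L_S^k Γ̃(z, w) = w^(k·ξ) · (L_Z^k Γ)(w⁻¹·z). In particular, if S₁ and S₂ are the homogenizations of Z of two different degrees ξ₁ and ξ₂, then L_{S₁}^k Γ̃(z, 1) = L_{S₂}^k Γ̃(z, 1) = L_Z^k Γ(z) for all k and z. -/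

import Mathlib

/-- The Lie derivative of `g` along the vector field `X`: `L_X g (y) = Dg(y) (X y)`. -/
noncomputable def lieDeriv {E : Type*} [NormedAddCommGroup E] [NormedSpace ℝ E]
    (X : E → E) (g : E → ℝ) : E → ℝ :=
  fun y => fderiv ℝ g y (X y)

/-- Iterated Lie derivatives: `L_X^0 g = g`, `L_X^(k+1) g = L_X (L_X^k g)`. -/
noncomputable def lieDerivIter {E : Type*} [NormedAddCommGroup E] [NormedSpace ℝ E]
    (X : E → E) (g : E → ℝ) : ℕ → E → ℝ
  | 0 => g
  | k + 1 => lieDeriv X (lieDerivIter X g k)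

lemma lieDerivIter_contDiff {E : Type*} [NormedAddCommGroup E] [NormedSpace ℝ E]
    {X : E → E} {g : E → ℝ} (hX : ContDiff ℝ (⊤ : ℕ∞) X) (hg : ContDiff ℝ (⊤ : ℕ∞) g) (k : ℕ) :
    ContDiff ℝ (⊤ : ℕ∞) (lieDerivIter X g k) := by
  induction k with
  | zero => exact hg
  | succ k ih => exact (ih.fderiv_right (by simp)).clm_apply hX

lemma homog_key {m : ℕ} (Z : (Fin m → ℝ) → (Fin m → ℝ)) (Γ : (Fin m → ℝ) → ℝ)
    (hZ : ContDiff ℝ (⊤ : ℕ∞) Z) (hΓ : ContDiff ℝ (⊤ : ℕ∞) Γ) (ξ : ℝ)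
    (S : (Fin m → ℝ) × ℝ → (Fin m → ℝ) × ℝ)
    (hS : ∀ (z : Fin m → ℝ) (w : ℝ), S (z, w) = (w ^ (ξ + 1) • Z (w⁻¹ • z), (0 : ℝ)))
    (Γt : (Fin m → ℝ) × ℝ → ℝ)
    (hΓt : ∀ (z : Fin m → ℝ) (w : ℝ), Γt (z, w) = Γ (w⁻¹ • z)) :
    ∀ (k : ℕ) (z : Fin m → ℝ) (w : ℝ), 0 < w →
      lieDerivIter S Γt k (z, w) = w ^ ((k : ℝ) * ξ) * lieDerivIter Z Γ k (w⁻¹ • z) := by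
  intro k
  induction k with
  | zero =>
    intro z w hw
    simp [lieDerivIter, hΓt]
  | succ k ih =>
    intro z w hw
    set g := lieDerivIter Z Γ k with hgdef
    have hg : ContDiff ℝ (⊤ : ℕ∞) g := lieDerivIter_contDiff hZ hΓ k
    set c : ℝ := (k : ℝ) * ξ with hc
    set y : Fin m → ℝ := w⁻¹ • z with hy
    set F : (Fin m → ℝ) × ℝ → ℝ := fun p => p.2 ^ c * g (p.2⁻¹ • p.1) with hF
    have hev : lieDerivIter S Γt k =ᶠ[nhds (z, w)] F := by
      have hU : IsOpen {p : (Fin m → ℝ) × ℝ | 0 < p.2} :=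
        isOpen_lt continuous_const continuous_snd
      filter_upwards [hU.mem_nhds hw] with p hp
      exact ih p.1 p.2 hp
    -- derivatives
    have h1 : HasFDerivAt (fun p : (Fin m → ℝ) × ℝ => p.2 ^ c)
        ((c * w ^ (c - 1)) • ContinuousLinearMap.snd ℝ (Fin m → ℝ) ℝ) (z, w) :=
      by
        have := (Real.hasDerivAt_rpow_const (x := w) (p := c) (Or.inl hw.ne')).comp_hasFDerivAt (z, w)
          (hasFDerivAt_snd (𝕜 := ℝ) (p := (z, w)))
        exact this
    have hinv : HasFDerivAt (fun p : (Fin m → ℝ) × ℝ => p.2⁻¹)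
        ((-(w ^ 2)⁻¹) • ContinuousLinearMap.snd ℝ (Fin m → ℝ) ℝ) (z, w) :=
      (hasDerivAt_inv hw.ne').comp_hasFDerivAt (z, w) hasFDerivAt_snd
    have hφ : HasFDerivAt (fun p : (Fin m → ℝ) × ℝ => p.2⁻¹ • p.1)
        (w⁻¹ • ContinuousLinearMap.fst ℝ (Fin m → ℝ) ℝ +
          ((-(w ^ 2)⁻¹) • ContinuousLinearMap.snd ℝ (Fin m → ℝ) ℝ).smulRight z) (z, w) :=
      hinv.smul hasFDerivAt_fst
    have hgφ : HasFDerivAt (fun p : (Fin m → ℝ) × ℝ => g (p.2⁻¹ • p.1))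
        ((fderiv ℝ g y).comp
          (w⁻¹ • ContinuousLinearMap.fst ℝ (Fin m → ℝ) ℝ +
            ((-(w ^ 2)⁻¹) • ContinuousLinearMap.snd ℝ (Fin m → ℝ) ℝ).smulRight z)) (z, w) :=
      ((hg.differentiable (by simp) y).hasFDerivAt).comp (z, w) hφ
    have hFd : HasFDerivAt F
        (w ^ c • ((fderiv ℝ g y).comp
            (w⁻¹ • ContinuousLinearMap.fst ℝ (Fin m → ℝ) ℝ +
              ((-(w ^ 2)⁻¹) • ContinuousLinearMap.snd ℝ (Fin m → ℝ) ℝ).smulRight z)) +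
          g y • ((c * w ^ (c - 1)) • ContinuousLinearMap.snd ℝ (Fin m → ℝ) ℝ)) (z, w) :=
      h1.mul hgφ
    have step : lieDerivIter S Γt (k + 1) (z, w) = fderiv ℝ F (z, w) (S (z, w)) := by
      show fderiv ℝ (lieDerivIter S Γt k) (z, w) (S (z, w)) = _
      rw [hev.fderiv_eq]
    rw [step, hFd.fderiv, hS]
    simp only [ContinuousLinearMap.add_apply, ContinuousLinearMap.smul_apply,
      ContinuousLinearMap.comp_apply, ContinuousLinearMap.coe_fst',
      ContinuousLinearMap.coe_snd', ContinuousLinearMap.smulRight_apply,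
      smul_eq_mul, mul_zero, zero_smul, add_zero, zero_mul, mul_zero]
    rw [smul_smul]
    rw [map_smul]
    have hexp : w ^ c * (w⁻¹ * w ^ (ξ + 1)) = w ^ (((k : ℕ) + 1 : ℝ) * ξ) := by
      rw [show w⁻¹ = w ^ (-1 : ℝ) by rw [Real.rpow_neg_one], ← Real.rpow_add hw,
        ← Real.rpow_add hw]
      congr 1
      push_cast [hc]
      ring
    rw [smul_eq_mul, ← mul_assoc, hexp]
    push_cast
    rfl

/-- Iterated Lie derivatives of the homogenized system: for the degree-`ξ`
homogenization `S (z, w) = (w^(ξ+1) • Z (w⁻¹ • z), 0)` and the homogenized function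
`Γ̃ (z, w) = Γ (w⁻¹ • z)`, one has
`L_S^k Γ̃ (z, w) = w^(k ξ) * (L_Z^k Γ) (w⁻¹ • z)` for every `k`, `z` and `w > 0`.
In particular, homogenizations of two different degrees `ξ₁`, `ξ₂` produce the same
iterated Lie derivatives on the slice `w = 1`, namely `L_Z^k Γ`. -/
theorem lie_deriv_iter_homogenized {m : ℕ}
    (Z : (Fin m → ℝ) → (Fin m → ℝ)) (Γ : (Fin m → ℝ) → ℝ)
    (hZ : ContDiff ℝ (⊤ : ℕ∞) Z) (hΓ : ContDiff ℝ (⊤ : ℕ∞) Γ)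
    (ξ : ℝ)
    (S : (Fin m → ℝ) × ℝ → (Fin m → ℝ) × ℝ)
    (hS : ∀ (z : Fin m → ℝ) (w : ℝ), S (z, w) = (w ^ (ξ + 1) • Z (w⁻¹ • z), (0 : ℝ)))
    (Γt : (Fin m → ℝ) × ℝ → ℝ)
    (hΓt : ∀ (z : Fin m → ℝ) (w : ℝ), Γt (z, w) = Γ (w⁻¹ • z))
    (ξ₂ : ℝ) (S₂ : (Fin m → ℝ) × ℝ → (Fin m → ℝ) × ℝ)
    (hS₂ : ∀ (z : Fin m → ℝ) (w : ℝ),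
      S₂ (z, w) = (w ^ (ξ₂ + 1) • Z (w⁻¹ • z), (0 : ℝ))) :
    (∀ (k : ℕ) (z : Fin m → ℝ) (w : ℝ), 0 < w →
      lieDerivIter S Γt k (z, w) = w ^ ((k : ℝ) * ξ) * lieDerivIter Z Γ k (w⁻¹ • z)) ∧
    (∀ (k : ℕ) (z : Fin m → ℝ),
      lieDerivIter S Γt k (z, 1) = lieDerivIter Z Γ k z ∧
      lieDerivIter S₂ Γt k (z, 1) = lieDerivIter Z Γ k z) := by
  refine ⟨homog_key Z Γ hZ hΓ ξ S hS Γt hΓt, ?_⟩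
  intro k z
  have h1 := homog_key Z Γ hZ hΓ ξ S hS Γt hΓt k z 1 one_pos
  have h2 := homog_key Z Γ hZ hΓ ξ₂ S₂ hS₂ Γt hΓt k z 1 one_pos
  simp [Real.one_rpow] at h1 h2
  exact ⟨h1, h2⟩
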